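/- arXiv:2412.12741 — 3 statements merged into one kernel-verified Lean document; each statement's English description precedes it below -/
import Mathlib

section
/- Let d ≥ 1 and let f : P₂(ℝ^d) × ℝ^d × ℝ^d → ℝ be continuous (where P₂(ℝ^d) is equipped with the 2-Wasserstein distance) and symmetric in its last two arguments, i.e. f(μ,x,y) = f(μ,y,x) for all μ, x, y. Assume that (a) for every μ ∈ P₂(ℝ^d) and every coupling γ of μ with itself such that (x,y) ↦ f(μ,x,y) is γ-integrable one has ∫ f(μ,x,y) γ(dx,dy) ≥ 0 (equivalently, E[f(μ,X,Y)] ≥ 0 for all square-integrable random vectors X, Y both with law μ), and (b) f(μ,x,x) = 0 for every μ ∈ P₂(ℝ^d) and x ∈ ℝ^d. Then the inequality holds pointwise: f(μ,x,y) ≥ 0 for every μ ∈ P₂(ℝ^d) and all (x,y) ∈ ℝ^d × ℝ^d. -/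
/-! If `f(μ,x,y) < 0`, perturb `μ` to `μₜ = (1-2t)μ + t(δₓ + δ_y)`. The self-coupling of `μₜ`
that keeps the mass of `μ` on the diagonal and swaps the two atoms,
`(1-2t)(id,id)₊μ + t(δ_(x,y) + δ_(y,x))`, has `∫ f(μₜ,·,·) = 2t f(μₜ,x,y)` because `f(μₜ,·,·)` is
symmetric and vanishes on the diagonal; hence `f(μₜ,x,y) ≥ 0`. Sending each point `z` of the
`t`-parts of `μ` to `x` resp. `y` shows `W₂(μ,μₜ)² ≤ t ∫ (‖z-x‖² + ‖z-y‖²) dμ → 0`, and continuity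
of `f` gives `f(μ,x,y) ≥ 0`. -/

open MeasureTheory Set
open scoped ENNReal RealInnerProductSpace NNReal

noncomputable section

/-- A coupling of two measures on `ℝ^d`: a measure on the product whose marginals
are `μ` and `ν`. -/
def IsCoupling {d : ℕ} (γ : Measure (EuclideanSpace ℝ (Fin d) × EuclideanSpace ℝ (Fin d)))
    (μ ν : Measure (EuclideanSpace ℝ (Fin d))) : Prop :=
  γ.map Prod.fst = μ ∧ γ.map Prod.snd = ν

/-- `μ ∈ P₂(ℝ^d)`: a Borel probability measure with finite second moment. -/
def MemP2 {d : ℕ} (μ : Measure (EuclideanSpace ℝ (Fin d))) : Prop :=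
  IsProbabilityMeasure μ ∧ Integrable (fun x => ‖x‖ ^ 2) μ

/-- The 2-Wasserstein distance, as the infimum over couplings. -/
def W2 {d : ℕ} (μ ν : Measure (EuclideanSpace ℝ (Fin d))) : ℝ≥0∞ :=
  ⨅ γ ∈ {γ : Measure (EuclideanSpace ℝ (Fin d) × EuclideanSpace ℝ (Fin d)) |
      IsCoupling γ μ ν},
    (∫⁻ p, (‖p.1 - p.2‖₊ : ℝ≥0∞) ^ 2 ∂γ) ^ ((1 : ℝ) / 2)

open Filter Topology

local notation "ℝ^" d => EuclideanSpace ℝ (Fin d)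

namespace IsCoupling

variable {d : ℕ} {γ γ' : Measure ((ℝ^d) × ℝ^d)} {μ ν μ' ν' : Measure (ℝ^d)}

theorem add (h : IsCoupling γ μ ν) (h' : IsCoupling γ' μ' ν') :
    IsCoupling (γ + γ') (μ + μ') (ν + ν') :=
  ⟨by rw [Measure.map_add _ _ measurable_fst, h.1, h'.1],
    by rw [Measure.map_add _ _ measurable_snd, h.2, h'.2]⟩

theorem smul (h : IsCoupling γ μ ν) (c : ℝ≥0∞) : IsCoupling (c • γ) (c • μ) (c • ν) :=
  ⟨by rw [Measure.map_smul, h.1], by rw [Measure.map_smul, h.2]⟩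

end IsCoupling

theorem isCoupling_map_prodMk {d : ℕ} (μ : Measure (ℝ^d)) {g h : (ℝ^d) → ℝ^d}
    (hg : Measurable g) (hh : Measurable h) :
    IsCoupling (μ.map fun z => (g z, h z)) (μ.map g) (μ.map h) :=
  ⟨by rw [Measure.map_map measurable_fst (hg.prodMk hh)]; rfl,
    by rw [Measure.map_map measurable_snd (hg.prodMk hh)]; rfl⟩

theorem isCoupling_dirac {d : ℕ} (x y : ℝ^d) :
    IsCoupling (Measure.dirac (x, y)) (Measure.dirac x) (Measure.dirac y) :=
  ⟨Measure.map_dirac' measurable_fst _, Measure.map_dirac' measurable_snd _⟩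

theorem W2_le_of_isCoupling {d : ℕ} {γ : Measure ((ℝ^d) × ℝ^d)} {μ ν : Measure (ℝ^d)}
    (h : IsCoupling γ μ ν) :
    W2 μ ν ≤ (∫⁻ p, (‖p.1 - p.2‖₊ : ℝ≥0∞) ^ 2 ∂γ) ^ ((1 : ℝ) / 2) :=
  iInf₂_le γ h

theorem MemP2.lintegral_nnnorm_sub_sq_lt_top {d : ℕ} {μ : Measure (ℝ^d)} (hμ : MemP2 μ)
    (a : ℝ^d) : ∫⁻ z, (‖z - a‖₊ : ℝ≥0∞) ^ 2 ∂μ < ⊤ := by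
  have := hμ.1
  have hid : MemLp id 2 μ := (memLp_two_iff_integrable_sq_norm aestronglyMeasurable_id).2 hμ.2
  have := ((memLp_two_iff_integrable_sq_norm (by fun_prop)).1 (hid.sub (memLp_const a))).2
  simpa [HasFiniteIntegral, enorm_pow, enorm_eq_nnnorm] using this

section Mixture

variable {d : ℕ} (μ : Measure (ℝ^d)) (t : ℝ) (x y : ℝ^d)

def mixWithDiracs : Measure (ℝ^d) :=
  ENNReal.ofReal (1 - 2 * t) • μ + ENNReal.ofReal t • (Measure.dirac x + Measure.dirac y)

def swapCoupling : Measure ((ℝ^d) × ℝ^d) :=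
  ENNReal.ofReal (1 - 2 * t) • μ.map (fun z => (z, z)) +
    ENNReal.ofReal t • (Measure.dirac (x, y) + Measure.dirac (y, x))

def mixTransportPlan : Measure ((ℝ^d) × ℝ^d) :=
  ENNReal.ofReal (1 - 2 * t) • μ.map (fun z => (z, z)) +
    ENNReal.ofReal t • (μ.map (fun z => (z, x)) + μ.map (fun z => (z, y)))

theorem isCoupling_swapCoupling :
    IsCoupling (swapCoupling μ t x y) (mixWithDiracs μ t x y) (mixWithDiracs μ t x y) := by
  have h := ((isCoupling_map_prodMk μ measurable_id measurable_id).smul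
    (ENNReal.ofReal (1 - 2 * t))).add (((isCoupling_dirac x y).add (isCoupling_dirac y x)).smul
      (ENNReal.ofReal t))
  rwa [Measure.map_id, add_comm (Measure.dirac y)] at h

variable {t}

theorem ofReal_one_sub_two_mul_add (ht₀ : 0 ≤ t) (ht₁ : 2 * t ≤ 1) :
    ENNReal.ofReal (1 - 2 * t) + (ENNReal.ofReal t + ENNReal.ofReal t) = 1 := by
  rw [← ENNReal.ofReal_add ht₀ ht₀, ← ENNReal.ofReal_add (by linarith) (by linarith),
    show 1 - 2 * t + (t + t) = 1 by ring, ENNReal.ofReal_one]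

theorem isCoupling_mixTransportPlan [IsProbabilityMeasure μ] (ht₀ : 0 ≤ t) (ht₁ : 2 * t ≤ 1) :
    IsCoupling (mixTransportPlan μ t x y) μ (mixWithDiracs μ t x y) := by
  have h := ((isCoupling_map_prodMk μ measurable_id measurable_id).smul
    (ENNReal.ofReal (1 - 2 * t))).add (((isCoupling_map_prodMk μ measurable_id
      (measurable_const (a := x))).add
        (isCoupling_map_prodMk μ measurable_id (measurable_const (a := y)))).smul
        (ENNReal.ofReal t))
  simp only [Measure.map_id, Measure.map_const, measure_univ, one_smul] at h
  have hμ : ENNReal.ofReal (1 - 2 * t) • μ + ENNReal.ofReal t • (μ + μ) = μ := by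
    rw [smul_add, ← add_smul, ← add_smul, ofReal_one_sub_two_mul_add ht₀ ht₁, one_smul]
  rwa [hμ] at h

theorem memP2_mixWithDiracs (hμ : MemP2 μ) (ht₀ : 0 ≤ t) (ht₁ : 2 * t ≤ 1) :
    MemP2 (mixWithDiracs μ t x y) := by
  have := hμ.1
  refine ⟨⟨?_⟩, ?_⟩
  · simp only [mixWithDiracs, smul_add, Measure.add_apply, Measure.smul_apply, measure_univ,
      smul_eq_mul, mul_one]
    exact ofReal_one_sub_two_mul_add ht₀ ht₁
  · have hδ : ∀ a : ℝ^d, Integrable (fun z : ℝ^d => ‖z‖ ^ 2) (Measure.dirac a) :=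
      fun _ => integrable_dirac enorm_lt_top
    exact (hμ.2.smul_measure ENNReal.ofReal_ne_top).add_measure
      (((hδ x).add_measure (hδ y)).smul_measure ENNReal.ofReal_ne_top)

variable {μ x y}

theorem ae_eq_zero_map_diag {g : (ℝ^d) → (ℝ^d) → ℝ} (hg : ∀ z, g z z = 0) :
    (fun p : (ℝ^d) × ℝ^d => g p.1 p.2) =ᵐ[μ.map fun z => (z, z)] 0 := by
  have hdiag : ∀ᵐ p ∂μ.map (fun z => (z, z)), p.1 = p.2 :=
    (ae_map_iff (by fun_prop) (isClosed_diagonal.measurableSet)).2 (ae_of_all _ fun _ => rfl)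
  filter_upwards [hdiag] with p hp
  simp [hp, hg]

theorem integrable_map_diag {g : (ℝ^d) → (ℝ^d) → ℝ} (hg : ∀ z, g z z = 0) :
    Integrable (fun p : (ℝ^d) × ℝ^d => g p.1 p.2) (μ.map fun z => (z, z)) :=
  (integrable_zero _ _ _).congr (ae_eq_zero_map_diag hg).symm

theorem integrable_swapCoupling {g : (ℝ^d) → (ℝ^d) → ℝ} (hg : ∀ z, g z z = 0) :
    Integrable (fun p : (ℝ^d) × ℝ^d => g p.1 p.2) (swapCoupling μ t x y) :=
  ((integrable_map_diag hg).smul_measure ENNReal.ofReal_ne_top).add_measure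
    (((integrable_dirac enorm_lt_top).add_measure (integrable_dirac enorm_lt_top)).smul_measure
      ENNReal.ofReal_ne_top)

theorem integral_swapCoupling {g : (ℝ^d) → (ℝ^d) → ℝ} (hg : ∀ z, g z z = 0) (ht₀ : 0 ≤ t) :
    ∫ p, g p.1 p.2 ∂swapCoupling μ t x y = t * (g x y + g y x) := by
  obtain ⟨hdiag, hatoms⟩ := integrable_add_measure.1 (integrable_swapCoupling (t := t) (x := x)
    (y := y) hg)
  rw [swapCoupling, integral_add_measure hdiag hatoms, integral_smul_measure,
    integral_smul_measure, integral_add_measure (integrable_dirac enorm_lt_top)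
      (integrable_dirac enorm_lt_top), integral_congr_ae (ae_eq_zero_map_diag hg),
    integral_dirac, integral_dirac, ENNReal.toReal_ofReal ht₀]
  simp

theorem lintegral_mixTransportPlan :
    ∫⁻ p, (‖p.1 - p.2‖₊ : ℝ≥0∞) ^ 2 ∂mixTransportPlan μ t x y =
      ENNReal.ofReal t * (∫⁻ z, (‖z - x‖₊ : ℝ≥0∞) ^ 2 ∂μ + ∫⁻ z, (‖z - y‖₊ : ℝ≥0∞) ^ 2 ∂μ) := by
  have hcost : Measurable fun p : (ℝ^d) × ℝ^d => (‖p.1 - p.2‖₊ : ℝ≥0∞) ^ 2 := by fun_prop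
  rw [mixTransportPlan, lintegral_add_measure, lintegral_smul_measure, lintegral_smul_measure,
    lintegral_add_measure, lintegral_map hcost (by fun_prop), lintegral_map hcost (by fun_prop),
    lintegral_map hcost (by fun_prop)]
  simp

end Mixture

theorem tendsto_W2_mixWithDiracs {d : ℕ} {μ : Measure (ℝ^d)} (hμ : MemP2 μ) (x y : ℝ^d) :
    Tendsto (fun t => W2 μ (mixWithDiracs μ t x y)) (𝓝[>] 0) (𝓝 0) := by
  have := hμ.1
  set A := ∫⁻ z, (‖z - x‖₊ : ℝ≥0∞) ^ 2 ∂μ + ∫⁻ z, (‖z - y‖₊ : ℝ≥0∞) ^ 2 ∂μ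
  have hA : A ≠ ⊤ := (ENNReal.add_lt_top.2 ⟨hμ.lintegral_nnnorm_sub_sq_lt_top x,
    hμ.lintegral_nnnorm_sub_sq_lt_top y⟩).ne
  have hbound : Tendsto (fun t => (ENNReal.ofReal t * A) ^ ((1 : ℝ) / 2)) (𝓝[>] 0) (𝓝 0) := by
    have hlin : Tendsto (fun t => ENNReal.ofReal t * A) (𝓝 0) (𝓝 0) := by
      simpa using
        ENNReal.Tendsto.mul_const (ENNReal.tendsto_ofReal (tendsto_id (x := 𝓝 0))) (Or.inr hA)
    have hsqrt := (ENNReal.continuous_rpow_const (y := 1 / 2)).tendsto 0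
    rw [ENNReal.zero_rpow_of_pos (by norm_num)] at hsqrt
    exact (hsqrt.comp hlin).mono_left nhdsWithin_le_nhds
  refine tendsto_of_tendsto_of_tendsto_of_le_of_le' tendsto_const_nhds hbound
    (Eventually.of_forall fun _ => zero_le) ?_
  filter_upwards [Ioo_mem_nhdsGT (by norm_num : (0 : ℝ) < 1 / 2)] with t ht
  rw [← lintegral_mixTransportPlan]
  exact W2_le_of_isCoupling (isCoupling_mixTransportPlan μ x y ht.1.le (by linarith [ht.2]))

theorem tendsto_of_tendsto_W2 {d : ℕ} {g : Measure (ℝ^d) → ℝ} {μ : Measure (ℝ^d)}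
    (hg : ∀ ε > (0 : ℝ), ∃ δ > (0 : ℝ), ∀ ν, MemP2 ν → W2 μ ν < ENNReal.ofReal δ →
      |g ν - g μ| < ε)
    {ι : Type*} {l : Filter ι} {ν : ι → Measure (ℝ^d)} (hν : ∀ᶠ i in l, MemP2 (ν i))
    (hW : Tendsto (fun i => W2 μ (ν i)) l (𝓝 0)) :
    Tendsto (fun i => g (ν i)) l (𝓝 (g μ)) := by
  refine Metric.tendsto_nhds.2 fun ε hε => ?_
  obtain ⟨δ, hδ, hgδ⟩ := hg ε hε
  filter_upwards [hν, hW.eventually (gt_mem_nhds (ENNReal.ofReal_pos.2 hδ))] with i hi hWi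
  exact hgδ _ hi hWi

theorem expectation_to_pointwise_general (d : ℕ)
    (f : Measure (EuclideanSpace ℝ (Fin d)) → EuclideanSpace ℝ (Fin d) →
      EuclideanSpace ℝ (Fin d) → ℝ)
    (hsymm : ∀ μ x y, f μ x y = f μ y x)
    (hcont : ∀ μ, MemP2 μ → ∀ x y : EuclideanSpace ℝ (Fin d), ∀ ε > (0 : ℝ), ∃ δ > (0 : ℝ),
      ∀ ν, MemP2 ν → ∀ x' y' : EuclideanSpace ℝ (Fin d),
        W2 μ ν < ENNReal.ofReal δ → dist x x' < δ → dist y y' < δ →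
        |f ν x' y' - f μ x y| < ε)
    (hpos : ∀ μ, MemP2 μ →
      ∀ γ : Measure (EuclideanSpace ℝ (Fin d) × EuclideanSpace ℝ (Fin d)),
        IsCoupling γ μ μ →
        Integrable (fun p : EuclideanSpace ℝ (Fin d) × EuclideanSpace ℝ (Fin d) =>
          f μ p.1 p.2) γ →
        0 ≤ ∫ p, f μ p.1 p.2 ∂γ)
    (hdiag : ∀ μ, MemP2 μ → ∀ x, f μ x x = 0) :
    ∀ μ, MemP2 μ → ∀ x y, 0 ≤ f μ x y := by
  intro μ hμ x y
  have hmix : ∀ᶠ t in 𝓝[>] (0 : ℝ),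
      MemP2 (mixWithDiracs μ t x y) ∧ 0 ≤ f (mixWithDiracs μ t x y) x y := by
    filter_upwards [Ioo_mem_nhdsGT (by norm_num : (0 : ℝ) < 1 / 2)] with t ⟨ht₀, ht₁⟩
    have hν := memP2_mixWithDiracs μ x y hμ ht₀.le (by linarith)
    have hint := hpos _ hν _ (isCoupling_swapCoupling μ t x y)
      (integrable_swapCoupling (hdiag _ hν))
    rw [integral_swapCoupling (hdiag _ hν) ht₀.le, hsymm _ y x] at hint
    exact ⟨hν, by nlinarith⟩
  have hlim : Tendsto (fun t => f (mixWithDiracs μ t x y) x y) (𝓝[>] 0) (𝓝 (f μ x y)) := by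
    refine tendsto_of_tendsto_W2 (g := fun ν => f ν x y) (fun ε hε => ?_)
      (hmix.mono fun _ h => h.1) (tendsto_W2_mixWithDiracs hμ x y)
    obtain ⟨δ, hδ, hfδ⟩ := hcont μ hμ x y ε hε
    exact ⟨δ, hδ, fun ν hν hW => hfδ ν hν x y hW (by simpa) (by simpa)⟩
  exact ge_of_tendsto hlim (hmix.mono fun _ h => h.2)

/-- **Proposition 1.2.** If `f : P₂(ℝ^d) × ℝ^d × ℝ^d → ℝ` is continuous (w.r.t. the
`W₂` distance in the measure argument), symmetric in `(x,y)`, vanishes on the diagonal,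
and satisfies `∫ f(μ,x,y) γ(dx,dy) ≥ 0` for every coupling `γ` of `μ` with itself,
then `f(μ,x,y) ≥ 0` pointwise. -/
theorem expectation_to_pointwise (d : ℕ) (hd : 1 ≤ d)
    (f : Measure (EuclideanSpace ℝ (Fin d)) → EuclideanSpace ℝ (Fin d) →
      EuclideanSpace ℝ (Fin d) → ℝ)
    (hsymm : ∀ μ x y, f μ x y = f μ y x)
    (hcont : ∀ μ, MemP2 μ → ∀ x y : EuclideanSpace ℝ (Fin d), ∀ ε > (0 : ℝ), ∃ δ > (0 : ℝ),
      ∀ ν, MemP2 ν → ∀ x' y' : EuclideanSpace ℝ (Fin d),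
        W2 μ ν < ENNReal.ofReal δ → dist x x' < δ → dist y y' < δ →
        |f ν x' y' - f μ x y| < ε)
    (hpos : ∀ μ, MemP2 μ →
      ∀ γ : Measure (EuclideanSpace ℝ (Fin d) × EuclideanSpace ℝ (Fin d)),
        IsCoupling γ μ μ →
        Integrable (fun p : EuclideanSpace ℝ (Fin d) × EuclideanSpace ℝ (Fin d) =>
          f μ p.1 p.2) γ →
        0 ≤ ∫ p, f μ p.1 p.2 ∂γ)
    (hdiag : ∀ μ, MemP2 μ → ∀ x, f μ x x = 0) :
    ∀ μ, MemP2 μ → ∀ x y, 0 ≤ f μ x y :=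
  expectation_to_pointwise_general d f hsymm hcont hpos hdiag
end
end

section
/- Let H : ℝ^d × ℝ^d → ℝ, written H(x,p), be continuously differentiable, and set F(x,p) = ∇_p H(x,p) and G(x,p) = −∇_x H(x,p). Assume: (a) for all (x,y,p,q) ∈ (ℝ^d)^4, (F(x,p) − F(y,q)) · (p − q) + (G(x,p) − G(y,q)) · (x − y) ≥ 0; (b) there exists α_H > 0 such that for every x ∈ ℝ^d the map p ↦ H(x,p) − (α_H/2)‖p‖² is convex (i.e. H is α_H-strongly convex in p, uniformly in x). Then for all (x,y,p,q) ∈ (ℝ^d)^4, (F(x,p) − F(y,q)) · (p − q) + (G(x,p) − G(y,q)) · (x − y) ≥ α_H ‖p − q‖². -/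
/-! Strong convexity of `H x` yields the first-order inequalities at `p` and at `q`, each with an
extra `α/2 ‖p - q‖²`. Joint monotonicity with `p = q` says that `z ↦ G z r = -∇ₓH(z, r)` is a
monotone gradient field, so `-H(·, r)` is convex and obeys the first-order inequalities in `x`.
In the sum of these four inequalities all values of `H` cancel, leaving the claim. -/

open scoped RealInnerProductSpace

section Gradient

variable {E : Type*} [NormedAddCommGroup E] [InnerProductSpace ℝ E] [CompleteSpace E]
  {f : E → ℝ} {f' x y : E}

theorem HasGradientAt.neg (hf : HasGradientAt f f' x) : HasGradientAt (fun z => -f z) (-f') x := by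
  rw [hasGradientAt_iff_hasFDerivAt, map_neg]
  exact hf.hasFDerivAt.neg

theorem HasGradientAt.sub_half_mul_norm_sq (hf : HasGradientAt f f' x) (m : ℝ) :
    HasGradientAt (fun z => f z - m / 2 * ‖z‖ ^ 2) (f' - m • x) x := by
  rw [hasGradientAt_iff_hasFDerivAt]
  refine (hf.hasFDerivAt.sub
    ((hasStrictFDerivAt_norm_sq x).hasFDerivAt.const_mul (m / 2))).congr_fderiv ?_
  ext v
  simp only [sub_apply, InnerProductSpace.toDual_apply_apply, smul_apply, coe_innerSL_apply,
    nsmul_eq_mul, Nat.cast_ofNat, smul_eq_mul, map_sub, map_smul, sub_right_inj]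
  ring

theorem HasGradientAt.hasDerivAt_comp_lineMap {t : ℝ}
    (hf : HasGradientAt f f' (AffineMap.lineMap x y t)) :
    HasDerivAt (f ∘ AffineMap.lineMap x y) ⟪f', y - x⟫ t := by
  simpa using hf.hasFDerivAt.comp_hasDerivAt t AffineMap.hasDerivAt_lineMap

theorem ConvexOn.inner_le_sub_of_hasGradientAt (hf : ConvexOn ℝ Set.univ f)
    (hf' : HasGradientAt f f' x) : ⟪f', y - x⟫ ≤ f y - f x := by
  have hline := (hf.comp_affineMap (AffineMap.lineMap x y)).le_slope_of_hasDerivAt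
    (Set.mem_univ 0) (Set.mem_univ 1) one_pos
    (HasGradientAt.hasDerivAt_comp_lineMap (by simpa using hf'))
  simpa [slope_def_field] using hline

theorem StrongConvexOn.inner_add_le_sub_of_hasGradientAt {m : ℝ}
    (hf : StrongConvexOn Set.univ m f) (hf' : HasGradientAt f f' x) :
    ⟪f', y - x⟫ + m / 2 * ‖y - x‖ ^ 2 ≤ f y - f x := by
  have h := (strongConvexOn_iff_convex.mp hf).inner_le_sub_of_hasGradientAt
    (hf'.sub_half_mul_norm_sq m) (y := y)
  have hnorm : ‖y - x‖ ^ 2 = ‖y‖ ^ 2 - 2 * ⟪x, y - x⟫ - ‖x‖ ^ 2 := by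
    rw [norm_sub_sq_real, inner_sub_right, real_inner_self_eq_norm_sq, real_inner_comm]
    ring
  rw [inner_sub_left, real_inner_smul_left] at h
  rw [hnorm]
  linarith

theorem convexOn_univ_of_hasGradientAt_of_monotone {f' : E → E}
    (hf : ∀ z, HasGradientAt f (f' z) z) (hmono : ∀ z w, 0 ≤ ⟪f' z - f' w, z - w⟫) :
    ConvexOn ℝ Set.univ f := by
  refine ⟨convex_univ, fun x _ y _ a b ha hb hab => ?_⟩
  set φ' : ℝ → ℝ := fun t => ⟪f' (AffineMap.lineMap x y t), y - x⟫
  have hφ (t : ℝ) : HasDerivAt (f ∘ AffineMap.lineMap x y) (φ' t) t :=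
    (hf _).hasDerivAt_comp_lineMap
  have hφ'_mono : Monotone φ' := by
    intro s t hst
    rcases hst.eq_or_lt with rfl | hst
    · rfl
    have h := hmono (AffineMap.lineMap x y t) (AffineMap.lineMap x y s)
    have hdiff : AffineMap.lineMap x y t - AffineMap.lineMap x y s = (t - s) • (y - x) := by
      simp only [AffineMap.lineMap_apply_module]
      module
    rw [hdiff, real_inner_smul_right, inner_sub_left,
      mul_nonneg_iff_of_pos_left (sub_pos.mpr hst)] at h
    exact sub_nonneg.mp h
  have hconv : ConvexOn ℝ Set.univ (f ∘ AffineMap.lineMap x y) :=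
    Monotone.convexOn_univ_of_deriv (fun t => (hφ t).differentiableAt)
      (by rwa [show deriv _ = φ' from funext fun t => (hφ t).deriv])
  have h := hconv.2 (Set.mem_univ 0) (Set.mem_univ 1) ha hb hab
  obtain rfl := eq_sub_of_add_eq hab
  simpa [AffineMap.lineMap_apply_module] using h

end Gradient

theorem joint_monotone_gradients_strongly_monotone_general (d : ℕ)
    (H : EuclideanSpace ℝ (Fin d) → EuclideanSpace ℝ (Fin d) → ℝ)
    (hH : ContDiff ℝ 1 (fun q : EuclideanSpace ℝ (Fin d) × EuclideanSpace ℝ (Fin d) =>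
      H q.1 q.2))
    (αH : ℝ)
    (hconv : ∀ x : EuclideanSpace ℝ (Fin d),
      ConvexOn ℝ Set.univ (fun p => H x p - αH / 2 * ‖p‖ ^ 2))
    (F G : EuclideanSpace ℝ (Fin d) → EuclideanSpace ℝ (Fin d) → EuclideanSpace ℝ (Fin d))
    (hF : ∀ x p, F x p = gradient (fun q => H x q) p)
    (hG : ∀ x p, G x p = -gradient (fun z => H z p) x)
    (hmono : ∀ x y p q : EuclideanSpace ℝ (Fin d),
      0 ≤ ⟪F x p - F y q, p - q⟫ + ⟪G x p - G y q, x - y⟫) :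
    ∀ x y p q : EuclideanSpace ℝ (Fin d),
      αH * ‖p - q‖ ^ 2 ≤ ⟪F x p - F y q, p - q⟫ + ⟪G x p - G y q, x - y⟫ := by
  intro x y p q
  have hdiff := hH.differentiable one_ne_zero
  have hF' (z r) : HasGradientAt (H z) (F z r) r := by
    rw [hF]
    exact ((hdiff.comp (differentiable_const z |>.prodMk differentiable_id)) r).hasGradientAt
  have hG' (z r) : HasGradientAt (fun w => -H w r) (G z r) z := by
    rw [hG]
    exact ((hdiff.comp (differentiable_id.prodMk (differentiable_const r))) z).hasGradientAt.neg
  have hstrong (z) : StrongConvexOn Set.univ αH (H z) := strongConvexOn_iff_convex.mpr (hconv z)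
  have hneg_convex (r) : ConvexOn ℝ Set.univ (fun w => -H w r) :=
    convexOn_univ_of_hasGradientAt_of_monotone (hG' · r) fun z w => by
      simpa using hmono z w r r
  have h1 := (hstrong x).inner_add_le_sub_of_hasGradientAt (hF' x p) (y := q)
  have h2 := (hstrong y).inner_add_le_sub_of_hasGradientAt (hF' y q) (y := p)
  have h3 := (hneg_convex p).inner_le_sub_of_hasGradientAt (hG' x p) (y := y)
  have h4 := (hneg_convex q).inner_le_sub_of_hasGradientAt (hG' y q) (y := x)
  rw [← neg_sub p, inner_neg_right, norm_neg] at h1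
  rw [← neg_sub x, inner_neg_right] at h3
  rw [inner_sub_left, inner_sub_left]
  linarith

/-- **Lemma (Section 4.2).** If `F = ∇_p H` and `G = −∇_x H` for a `C¹` Hamiltonian
`H(x,p)` that is `α_H`-strongly convex in `p` uniformly in `x`, then joint
monotonicity of `(F,G)` upgrades to strong joint monotonicity in `p`:
`(F(x,p) − F(y,q))·(p − q) + (G(x,p) − G(y,q))·(x − y) ≥ α_H ‖p − q‖²`. -/
theorem joint_monotone_gradients_strongly_monotone (d : ℕ)
    (H : EuclideanSpace ℝ (Fin d) → EuclideanSpace ℝ (Fin d) → ℝ)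
    (hH : ContDiff ℝ 1 (fun q : EuclideanSpace ℝ (Fin d) × EuclideanSpace ℝ (Fin d) =>
      H q.1 q.2))
    (αH : ℝ) (hαH : 0 < αH)
    (hconv : ∀ x : EuclideanSpace ℝ (Fin d),
      ConvexOn ℝ Set.univ (fun p => H x p - αH / 2 * ‖p‖ ^ 2))
    (F G : EuclideanSpace ℝ (Fin d) → EuclideanSpace ℝ (Fin d) → EuclideanSpace ℝ (Fin d))
    (hF : ∀ x p, F x p = gradient (fun q => H x q) p)
    (hG : ∀ x p, G x p = -gradient (fun z => H z p) x)
    (hmono : ∀ x y p q : EuclideanSpace ℝ (Fin d),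
      0 ≤ ⟪F x p - F y q, p - q⟫ + ⟪G x p - G y q, x - y⟫) :
    ∀ x y p q : EuclideanSpace ℝ (Fin d),
      αH * ‖p - q‖ ^ 2 ≤ ⟪F x p - F y q, p - q⟫ + ⟪G x p - G y q, x - y⟫ :=
  joint_monotone_gradients_strongly_monotone_general d H hH αH hconv F G hF hG hmono
end

section
/- Let T > 0, L ≥ 0, d ≥ 1. Let c₁, c₂ : [0,T] × ℝ^d → ℝ^d be such that for every s ∈ [0,T] and i ∈ {1,2}, z ↦ c_i(s,z) is L-Lipschitz, for every z the map s ↦ c_i(s,z) is measurable, and the function D(s) := sup_z ‖c₁(s,z) − c₂(s,z)‖ is finite and integrable on [0,T]. Let w : [0,T] → ℝ^d be any function, x₀ ∈ ℝ^d, and let x¹, x² : [0,T] → ℝ^d be continuous functions satisfying, for all t ∈ [0,T] and i ∈ {1,2}, x^i(t) = x₀ + ∫₀^t c_i(s, x^i(s)) ds + w(t). Then for all t ∈ [0,T], ‖x¹(t) − x²(t)‖ ≤ e^{Lt} ∫₀^t D(s) ds. -/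
/-!
Subtracting the two integral equations cancels `x₀` and the common noise `w`, so the gap
`φ t = ‖x₁ t - x₂ t‖` satisfies `φ u ≤ ∫₀ᵘ D + L ∫₀ᵘ φ`: splitting
`c₁(s, x₁) - c₂(s, x₂) = (c₁ - c₂)(s, x₁) + (c₂(s, x₁) - c₂(s, x₂))` bounds the first term by
`D s` and the second by `L φ s`. On `[0, t]` the first integral is at most `∫₀ᵗ D`, and
Grönwall's inequality, applied to the antiderivative `∫₀ᵘ φ`, gives `φ t ≤ e^{Lt} ∫₀ᵗ D`.
-/

open MeasureTheory Set
open scoped NNReal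

theorem aemeasurable_restrict_comp_of_continuous_of_measurable
    {α E F : Type*} [MeasurableSpace α]
    [NormedAddCommGroup E] [SecondCountableTopology E] [MeasurableSpace E] [BorelSpace E]
    [NormedAddCommGroup F] [MeasurableSpace F] [BorelSpace F]
    {μ : Measure α} {s : Set α} (hs : MeasurableSet s) {c : α → E → F}
    (hcont : ∀ t ∈ s, Continuous (c t)) (hmeas : ∀ z, Measurable fun t => c t z)
    {y : α → E} (hy : AEMeasurable y (μ.restrict s)) :
    AEMeasurable (fun t => c t (y t)) (μ.restrict s) := by
  classical
  set c' : α → E → F := fun t z => if t ∈ s then c t z else 0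
  have hc' : Measurable (Function.uncurry fun z t => c' t z) := by
    refine measurable_uncurry_of_continuous_of_measurable (fun t => ?_)
      (fun z => (hmeas z).ite hs measurable_const)
    by_cases ht : t ∈ s
    · simpa only [c', if_pos ht] using hcont t ht
    · simpa only [c', if_neg ht] using continuous_const
  refine ⟨fun t => c' t (hy.mk y t), hc'.comp (hy.measurable_mk.prodMk measurable_id), ?_⟩
  filter_upwards [ae_restrict_mem hs, hy.ae_eq_mk] with t ht hyt
  simp only [c', if_pos ht, hyt]

theorem le_mul_exp_of_le_add_mul_integral {φ : ℝ → ℝ} {a b ε K : ℝ} (hK : 0 ≤ K)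
    (hφ : ContinuousOn φ (Icc a b)) (h : ∀ u ∈ Icc a b, φ u ≤ ε + K * ∫ s in a..u, φ s) :
    ∀ u ∈ Icc a b, φ u ≤ ε * Real.exp (K * (u - a)) := by
  set ψ : ℝ → ℝ := fun u => ∫ s in a..u, φ s
  have hψ' : ∀ u ∈ Icc a b, HasDerivWithinAt ψ (φ u) (Icc a b) u := fun u hu =>
    have : Fact (u ∈ Icc a b) := ⟨hu⟩
    intervalIntegral.integral_hasDerivWithinAt_right
      (hφ.mono (uIcc_subset_Icc (left_mem_Icc.2 (hu.1.trans hu.2)) hu)).intervalIntegrable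
      (hφ.stronglyMeasurableAtFilter_nhdsWithin measurableSet_Icc u) (hφ u hu)
  have hψ : ∀ u ∈ Icc a b, ψ u ≤ gronwallBound 0 K ε (u - a) :=
    le_gronwallBound_of_liminf_deriv_right_le (f' := φ)
      (fun u hu => (hψ' u hu).continuousWithinAt)
      (fun u hu r hr => ((hψ' u (Ico_subset_Icc_self hu)).mono_of_mem_nhdsWithin
        (Icc_mem_nhdsGE_of_mem hu)).liminf_right_slope_le hr)
      (by simp [ψ]) (fun u hu => (h u (Ico_subset_Icc_self hu)).trans_eq (add_comm _ _))
  have hbound : ∀ x, K * gronwallBound 0 K ε x = ε * (Real.exp (K * x) - 1) := by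
    intro x
    rcases eq_or_lt_of_le hK with rfl | hKpos
    · simp
    · rw [gronwallBound_of_K_ne_0 hKpos.ne']
      field_simp
      ring
  intro u hu
  calc φ u ≤ ε + K * ψ u := h u hu
    _ ≤ ε + K * gronwallBound 0 K ε (u - a) := by gcongr; exact hψ u hu
    _ = ε * Real.exp (K * (u - a)) := by rw [hbound]; ring

section
variable {E : Type*} [NormedAddCommGroup E] [NormedSpace ℝ E]

theorem intervalIntegral.norm_integral_sub_integral_le {f g : ℝ → E} {a b : ℝ} (hab : a ≤ b)
    (hfg : IntervalIntegrable (fun x => f x - g x) volume a b) :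
    ‖(∫ x in a..b, f x) - ∫ x in a..b, g x‖ ≤ ∫ x in a..b, ‖f x - g x‖ := by
  by_cases hf : IntervalIntegrable f volume a b
  · have hg : IntervalIntegrable g volume a b := by simpa using hf.sub hfg
    rw [← intervalIntegral.integral_sub hf hg]
    exact intervalIntegral.norm_integral_le_integral_norm hab
  · -- `g` is then not integrable either, and both integrals take the junk value `0`
    have hg : ¬IntervalIntegrable g volume a b := fun hg => hf (by simpa using hfg.add hg)
    rw [intervalIntegral.integral_undef hf, intervalIntegral.integral_undef hg, sub_zero,
      norm_zero]
    exact intervalIntegral.integral_nonneg hab fun x _ => norm_nonneg _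

theorem norm_sub_le_integral_add_mul_integral_norm_sub {a b : ℝ} {L : ℝ≥0}
    {c₁ c₂ : ℝ → E → E} {D : ℝ → ℝ} {x₁ x₂ : ℝ → E}
    (hlip : ∀ s ∈ Icc a b, LipschitzWith L (c₂ s))
    (hD : ∀ s ∈ Icc a b, ∀ z, ‖c₁ s z - c₂ s z‖ ≤ D s) (hDint : IntegrableOn D (Icc a b))
    (hx : ContinuousOn (fun s => ‖x₁ s - x₂ s‖) (Icc a b))
    (hmeas : AEStronglyMeasurable (fun s => c₁ s (x₁ s) - c₂ s (x₂ s))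
      (volume.restrict (Icc a b)))
    (heq : ∀ u ∈ Icc a b,
      x₁ u - x₂ u = (∫ s in a..u, c₁ s (x₁ s)) - ∫ s in a..u, c₂ s (x₂ s)) :
    ∀ u ∈ Icc a b, ‖x₁ u - x₂ u‖ ≤
      (∫ s in a..u, D s) + L * ∫ s in a..u, ‖x₁ s - x₂ s‖ := by
  intro u hu
  have hdrift : ∀ s ∈ Icc a b,
      ‖c₁ s (x₁ s) - c₂ s (x₂ s)‖ ≤ D s + L * ‖x₁ s - x₂ s‖ := fun s hs => calc
    _ ≤ ‖c₁ s (x₁ s) - c₂ s (x₁ s)‖ + ‖c₂ s (x₁ s) - c₂ s (x₂ s)‖ :=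
        norm_sub_le_norm_sub_add_norm_sub _ _ _
    _ ≤ D s + L * ‖x₁ s - x₂ s‖ := add_le_add (hD s hs _) ((hlip s hs).norm_sub_le _ _)
  have hIcc : uIcc a u ⊆ Icc a b := by
    rw [uIcc_of_le hu.1]; exact Icc_subset_Icc_right hu.2
  have hIoc : uIoc a u ⊆ Icc a b := by
    rw [uIoc_of_le hu.1]; exact Ioc_subset_Icc_self.trans (Icc_subset_Icc_right hu.2)
  have hDi : IntervalIntegrable D volume a u := (hDint.mono_set hIcc).intervalIntegrable
  have hxi : IntervalIntegrable (fun s => ‖x₁ s - x₂ s‖) volume a u :=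
    (hx.mono hIcc).intervalIntegrable
  have hdiff : IntervalIntegrable (fun s => c₁ s (x₁ s) - c₂ s (x₂ s)) volume a u :=
    (hDi.add (hxi.const_mul L)).mono_fun' (hmeas.mono_measure (Measure.restrict_mono hIoc le_rfl))
      ((ae_restrict_iff' measurableSet_uIoc).2 (.of_forall fun s hs => hdrift s (hIoc hs)))
  calc ‖x₁ u - x₂ u‖ ≤ ∫ s in a..u, ‖c₁ s (x₁ s) - c₂ s (x₂ s)‖ := by
        rw [heq u hu]; exact intervalIntegral.norm_integral_sub_integral_le hu.1 hdiff
    _ ≤ ∫ s in a..u, (D s + L * ‖x₁ s - x₂ s‖) :=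
        intervalIntegral.integral_mono_on hu.1 hdiff.norm (hDi.add (hxi.const_mul L))
          fun s hs => hdrift s (Icc_subset_Icc_right hu.2 hs)
    _ = (∫ s in a..u, D s) + L * ∫ s in a..u, ‖x₁ s - x₂ s‖ := by
        rw [intervalIntegral.integral_add hDi (hxi.const_mul L),
          intervalIntegral.integral_const_mul]
end

theorem pathwise_drift_stability_general (d : ℕ) (T : ℝ) (L : ℝ≥0)
    (c₁ c₂ : ℝ → EuclideanSpace ℝ (Fin d) → EuclideanSpace ℝ (Fin d))
    (hlip₁ : ∀ s ∈ Icc (0 : ℝ) T, LipschitzWith L (c₁ s))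
    (hlip₂ : ∀ s ∈ Icc (0 : ℝ) T, LipschitzWith L (c₂ s))
    (hmeas₁ : ∀ z, Measurable fun s => c₁ s z)
    (hmeas₂ : ∀ z, Measurable fun s => c₂ s z)
    (hfin : ∀ s ∈ Icc (0 : ℝ) T,
      BddAbove (Set.range fun z : EuclideanSpace ℝ (Fin d) => ‖c₁ s z - c₂ s z‖))
    (hDint : IntegrableOn
      (fun s => ⨆ z : EuclideanSpace ℝ (Fin d), ‖c₁ s z - c₂ s z‖) (Icc (0 : ℝ) T))
    (w : ℝ → EuclideanSpace ℝ (Fin d)) (x₀ : EuclideanSpace ℝ (Fin d))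
    (x₁ x₂ : ℝ → EuclideanSpace ℝ (Fin d))
    (hx₁cont : ContinuousOn x₁ (Icc (0 : ℝ) T))
    (hx₂cont : ContinuousOn x₂ (Icc (0 : ℝ) T))
    (heq₁ : ∀ t ∈ Icc (0 : ℝ) T, x₁ t = x₀ + (∫ s in (0 : ℝ)..t, c₁ s (x₁ s)) + w t)
    (heq₂ : ∀ t ∈ Icc (0 : ℝ) T, x₂ t = x₀ + (∫ s in (0 : ℝ)..t, c₂ s (x₂ s)) + w t) :
    ∀ t ∈ Icc (0 : ℝ) T,
      ‖x₁ t - x₂ t‖ ≤ Real.exp ((L : ℝ) * t) *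
        ∫ s in (0 : ℝ)..t, ⨆ z : EuclideanSpace ℝ (Fin d), ‖c₁ s z - c₂ s z‖ := by
  intro t ht
  set D := fun s => ⨆ z : EuclideanSpace ℝ (Fin d), ‖c₁ s z - c₂ s z‖
  have hD : ∀ s ∈ Icc (0 : ℝ) T, ∀ z, ‖c₁ s z - c₂ s z‖ ≤ D s := fun s hs =>
    le_ciSup (hfin s hs)
  have hφ : ContinuousOn (fun s => ‖x₁ s - x₂ s‖) (Icc 0 T) := (hx₁cont.sub hx₂cont).norm
  have hdrift₁ := aemeasurable_restrict_comp_of_continuous_of_measurable (μ := volume)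
    measurableSet_Icc
    (fun s hs => (hlip₁ s hs).continuous) hmeas₁ (hx₁cont.aemeasurable measurableSet_Icc)
  have hdrift₂ := aemeasurable_restrict_comp_of_continuous_of_measurable (μ := volume)
    measurableSet_Icc
    (fun s hs => (hlip₂ s hs).continuous) hmeas₂ (hx₂cont.aemeasurable measurableSet_Icc)
  have hgap := norm_sub_le_integral_add_mul_integral_norm_sub hlip₂ hD hDint hφ
    (hdrift₁.sub hdrift₂).aestronglyMeasurable fun u hu => by rw [heq₁ u hu, heq₂ u hu]; abel
  have hDmono : ∀ u ∈ Icc 0 t, ∫ s in (0 : ℝ)..u, D s ≤ ∫ s in (0 : ℝ)..t, D s := fun u hu =>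
    intervalIntegral.integral_mono_interval le_rfl hu.1 hu.2
      ((ae_restrict_iff' measurableSet_Ioc).2 <| .of_forall fun s hs =>
        (norm_nonneg _).trans (hD s ⟨hs.1.le, hs.2.trans ht.2⟩ 0))
      ((intervalIntegrable_iff_integrableOn_Icc_of_le ht.1).2
        (hDint.mono_set (Icc_subset_Icc_right ht.2)))
  have hgronwall := le_mul_exp_of_le_add_mul_integral L.coe_nonneg
    (hφ.mono (Icc_subset_Icc_right ht.2))
    (fun u hu => (hgap u ⟨hu.1, hu.2.trans ht.2⟩).trans (add_le_add_left (hDmono u hu) _))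
    t (right_mem_Icc.2 ht.1)
  rwa [sub_zero, mul_comm] at hgronwall

/-- **Pathwise core of Lemma 2.2.** Two integral-equation flows driven by the same
noise path `w` and starting from the same point, with `L`-Lipschitz drifts `c₁, c₂`,
stay at distance at most `e^{Lt} ∫₀^t sup_z ‖c₁(s,z) − c₂(s,z)‖ ds`. -/
theorem pathwise_drift_stability (d : ℕ) (hd : 1 ≤ d) (T : ℝ) (hT : 0 < T) (L : ℝ≥0)
    (c₁ c₂ : ℝ → EuclideanSpace ℝ (Fin d) → EuclideanSpace ℝ (Fin d))
    (hlip₁ : ∀ s ∈ Icc (0 : ℝ) T, LipschitzWith L (c₁ s))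
    (hlip₂ : ∀ s ∈ Icc (0 : ℝ) T, LipschitzWith L (c₂ s))
    (hmeas₁ : ∀ z, Measurable fun s => c₁ s z)
    (hmeas₂ : ∀ z, Measurable fun s => c₂ s z)
    (hfin : ∀ s ∈ Icc (0 : ℝ) T,
      BddAbove (Set.range fun z : EuclideanSpace ℝ (Fin d) => ‖c₁ s z - c₂ s z‖))
    (hDint : IntegrableOn
      (fun s => ⨆ z : EuclideanSpace ℝ (Fin d), ‖c₁ s z - c₂ s z‖) (Icc (0 : ℝ) T))
    (w : ℝ → EuclideanSpace ℝ (Fin d)) (x₀ : EuclideanSpace ℝ (Fin d))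
    (x₁ x₂ : ℝ → EuclideanSpace ℝ (Fin d))
    (hx₁cont : ContinuousOn x₁ (Icc (0 : ℝ) T))
    (hx₂cont : ContinuousOn x₂ (Icc (0 : ℝ) T))
    (heq₁ : ∀ t ∈ Icc (0 : ℝ) T, x₁ t = x₀ + (∫ s in (0 : ℝ)..t, c₁ s (x₁ s)) + w t)
    (heq₂ : ∀ t ∈ Icc (0 : ℝ) T, x₂ t = x₀ + (∫ s in (0 : ℝ)..t, c₂ s (x₂ s)) + w t) :
    ∀ t ∈ Icc (0 : ℝ) T,
      ‖x₁ t - x₂ t‖ ≤ Real.exp ((L : ℝ) * t) *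
        ∫ s in (0 : ℝ)..t, ⨆ z : EuclideanSpace ℝ (Fin d), ‖c₁ s z - c₂ s z‖ :=
  pathwise_drift_stability_general d T L c₁ c₂ hlip₁ hlip₂ hmeas₁ hmeas₂ hfin hDint w x₀ x₁ x₂
    hx₁cont hx₂cont heq₁ heq₂
end
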